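/- arXiv:2306.08857 — 3 statements merged into one kernel-verified Lean document; each statement's English description precedes it below -/
import Mathlib

section
/- Let U be a finite-dimensional complex vector space with basis B, let w : U → U be a linear operator, and suppose for i = 1,2 there are bijections ξᵢ : B → B and preorders ≤ᵢ on B such that w acts on (U, B, ≤ᵢ) by ξᵢ up to lower-order terms. Then ξ₁ = ξ₂. -/
open scoped Classical

noncomputable section

/-- `w` acts on the based vector space `(U, b)` equipped with the preorder `le` by the
bijection `ξ` up to lower-order terms: for every basis element `x` there are integers `a y`
with `w (b x) = ± b (ξ x) + ∑_{y < x} a_y • b (ξ y)`, where the sign depends only on the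
equivalence class of `x` under the preorder. -/
def ActsByLOT {B U : Type*} [Fintype B] [AddCommGroup U] [Module ℂ U]
    (b : Module.Basis B ℂ U) (w : U →ₗ[ℂ] U) (ξ : Equiv.Perm B) (le : B → B → Prop) : Prop :=
  ∃ ε : B → ℂ, (∀ x, ε x = 1 ∨ ε x = -1) ∧
    (∀ x y, le x y → le y x → ε x = ε y) ∧
    ∀ x : B, ∃ a : B → ℤ,
      w (b x) = ε x • b (ξ x) +
        ∑ y : B, if le y x ∧ ¬ le x y then (a y : ℂ) • b (ξ y) else 0

/-!
Compare the two descriptions of the coefficient of `b (ξ₁ x)` in `w (b x)`: by the first it is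
`±1`, so by the second `ξ₁ x = ξ₂ y` with `y = x` or `y` strictly `le₂`-below `x`. Hence the
permutation `ξ₂⁻¹ ξ₁` moves every point either nowhere or strictly down a well-founded
relation, and a `le₂`-minimal moved point would be moved to another moved point below it.
-/

theorem WellFounded.eq_id_of_injective {α : Type*} {r : α → α → Prop} (hr : WellFounded r)
    {f : α → α} (hf : Function.Injective f) (hfr : ∀ x, f x = x ∨ r (f x) x) : f = id := by
  by_contra hne
  obtain ⟨x, hx⟩ : {x | f x ≠ x}.Nonempty := by
    simpa [funext_iff, Set.Nonempty] using hne
  obtain ⟨m, hm, hmin⟩ := hr.has_min {x | f x ≠ x} ⟨x, hx⟩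
  have hfm : f m ∈ {x | f x ≠ x} := fun h => hm (hf h)
  exact hmin (f m) hfm ((hfr m).resolve_left hm)

theorem Finite.wellFounded_strictPart {α : Type*} [Finite α] {le : α → α → Prop}
    (htrans : ∀ x y z, le x y → le y z → le x z) :
    WellFounded fun x y => le x y ∧ ¬ le y x :=
  haveI : IsTrans α fun x y => le x y ∧ ¬ le y x :=
    ⟨fun _ _ _ hxy hyz => ⟨htrans _ _ _ hxy.1 hyz.1, fun h => hxy.2 (htrans _ _ _ hyz.1 h)⟩⟩
  haveI : Std.Irrefl fun x y : α => le x y ∧ ¬ le y x := ⟨fun _ h => h.2 h.1⟩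
  Finite.wellFounded_of_trans_of_irrefl _

namespace ActsByLOT

variable {B U : Type*} [Fintype B] [AddCommGroup U] [Module ℂ U]
  {b : Module.Basis B ℂ U} {w : U →ₗ[ℂ] U} {ξ : Equiv.Perm B} {le : B → B → Prop}

theorem exists_repr_apply (h : ActsByLOT b w ξ le) (x : B) :
    ∃ ε : ℂ, (ε = 1 ∨ ε = -1) ∧ ∃ a : B → ℤ, ∀ y, b.repr (w (b x)) (ξ y) =
      (if y = x then ε else 0) + if le y x ∧ ¬ le x y then (a y : ℂ) else 0 := by
  obtain ⟨ε, hε, -, hw⟩ := h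
  obtain ⟨a, ha⟩ := hw x
  refine ⟨ε x, hε x, a, fun y => ?_⟩
  have hterm : ∀ z, b.repr (if le z x ∧ ¬ le x z then (a z : ℂ) • b (ξ z) else 0) (ξ y) =
      if y = z then (if le z x ∧ ¬ le x z then (a z : ℂ) else 0) else 0 := by
    intro z
    split_ifs <;> simp_all [ξ.injective.eq_iff]
  simp only [ha, map_add, map_smul, map_sum, Finsupp.add_apply, Finsupp.smul_apply,
    Finsupp.finsetSum_apply, hterm, Finset.sum_ite_eq, Module.Basis.repr_self,
    Finsupp.single_apply, ξ.injective.eq_iff]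
  simp [eq_comm (a := x)]

theorem repr_apply_self_ne_zero (h : ActsByLOT b w ξ le) (x : B) :
    b.repr (w (b x)) (ξ x) ≠ 0 := by
  obtain ⟨ε, hε, a, ha⟩ := h.exists_repr_apply x
  rcases hε with rfl | rfl <;> simp [ha]

theorem eq_or_lt_of_repr_apply_ne_zero (h : ActsByLOT b w ξ le) {x y : B}
    (hxy : b.repr (w (b x)) (ξ y) ≠ 0) : y = x ∨ le y x ∧ ¬ le x y := by
  obtain ⟨ε, -, a, ha⟩ := h.exists_repr_apply x
  by_contra hc
  push Not at hc
  simp_all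

end ActsByLOT

theorem lot_bijection_unique_general {B U : Type*} [Fintype B] [AddCommGroup U] [Module ℂ U]
    (b : Module.Basis B ℂ U) (w : U →ₗ[ℂ] U)
    (ξ₁ ξ₂ : Equiv.Perm B) (le₁ le₂ : B → B → Prop)
    (h₂trans : ∀ x y z, le₂ x y → le₂ y z → le₂ x z)
    (h₁ : ActsByLOT b w ξ₁ le₁) (h₂ : ActsByLOT b w ξ₂ le₂) :
    ξ₁ = ξ₂ := by
  have hdown : ∀ x, ξ₂.symm (ξ₁ x) = x ∨ le₂ (ξ₂.symm (ξ₁ x)) x ∧ ¬ le₂ x (ξ₂.symm (ξ₁ x)) :=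
    fun x => h₂.eq_or_lt_of_repr_apply_ne_zero <| by
      simpa using h₁.repr_apply_self_ne_zero x
  have hid := (Finite.wellFounded_strictPart h₂trans).eq_id_of_injective
    (ξ₂.symm.injective.comp ξ₁.injective) hdown
  ext x
  simpa using congr_arg ξ₂ (congr_fun hid x)

/-- If `w` acts on `(U, B, ≤ᵢ)` by `ξᵢ` up to lower-order terms for two bijections and
two preorders, then the bijections agree. -/
theorem lot_bijection_unique {B U : Type*} [Fintype B] [AddCommGroup U] [Module ℂ U]
    (b : Module.Basis B ℂ U) (w : U →ₗ[ℂ] U)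
    (ξ₁ ξ₂ : Equiv.Perm B) (le₁ le₂ : B → B → Prop)
    (h₁refl : ∀ x, le₁ x x) (h₁trans : ∀ x y z, le₁ x y → le₁ y z → le₁ x z)
    (h₂refl : ∀ x, le₂ x x) (h₂trans : ∀ x y z, le₂ x y → le₂ y z → le₂ x z)
    (h₁ : ActsByLOT b w ξ₁ le₁) (h₂ : ActsByLOT b w ξ₂ le₂) :
    ξ₁ = ξ₂ :=
  lot_bijection_unique_general b w ξ₁ ξ₂ le₁ le₂ h₂trans h₁ h₂
end
end

section
/- Suppose a linear operator w acts on a finite-dimensional based vector space (U, B, ≤) by a bijection ξ up to lower-order terms, and let ⪯ be a total order on B linearising the preorder ≤. Then the matrix [w] of w with respect to the ordered basis (B, ⪯) has a QR decomposition [w] = QR in which the orthogonal factor Q is a generalised permutation matrix for ξ with nonzero entries ±1, and R is an upper-triangular integer matrix with all diagonal entries equal to 1. -/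
open scoped Classical

noncomputable section

/-!
Proof idea: take `Q` to be the signed permutation matrix `Q (ξ j) j = ε j` and `R = Qᵀ [w]`.
Row `i` of `R` is `ε i` times row `ξ i` of `[w]`, i.e. `ε i` times the coefficients of
`b (ξ i)` in the images `w (b j)`. That coefficient is `ε i` for `j = i`, an integer when
`i` is strictly below `j` in the preorder, and `0` otherwise; since `⪯` linearises the
preorder, the latter case includes every `j ≺ i`.
-/

open scoped Matrix

section SignedPermMatrix

variable {n R : Type*} [Fintype n] [DecidableEq n] [Semiring R]

def signedPermMatrix (σ : Equiv.Perm n) (ε : n → R) : Matrix n n R :=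
  Matrix.of fun i j => if i = σ j then ε j else 0

theorem signedPermMatrix_transpose_mul_apply (σ : Equiv.Perm n) (ε : n → R)
    (M : Matrix n n R) (i j : n) :
    ((signedPermMatrix σ ε)ᵀ * M) i j = ε i * M (σ i) j := by
  simp [signedPermMatrix, Matrix.mul_apply, ite_mul]

theorem signedPermMatrix_transpose_mul_self (σ : Equiv.Perm n) {ε : n → R}
    (hε : ∀ x, ε x * ε x = 1) :
    (signedPermMatrix σ ε)ᵀ * signedPermMatrix σ ε = 1 := by
  ext i j
  rw [signedPermMatrix_transpose_mul_apply, Matrix.one_apply]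
  by_cases hij : i = j
  · subst hij
    simp [signedPermMatrix, hε]
  · simp [signedPermMatrix, hij]

end SignedPermMatrix

theorem LinearMap.toMatrix_apply_perm_of_eq_smul_add_sum {ι R M : Type*} [Fintype ι]
    [DecidableEq ι] [CommSemiring R] [AddCommMonoid M] [Module R M] (b : Module.Basis ι R M)
    (f : M →ₗ[R] M) (ξ : Equiv.Perm ι) (c : ι → R) (a : ι → ι → R)
    (hf : ∀ x, f (b x) = c x • b (ξ x) + ∑ y, a x y • b (ξ y)) (i j : ι) :
    LinearMap.toMatrix b b f (ξ i) j = (if i = j then c j else 0) + a j i := by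
  simp [LinearMap.toMatrix_apply, hf, Finsupp.single_apply, eq_comm]

theorem lot_QR_general {B U : Type*} [Fintype B] [DecidableEq B] [LinearOrder B]
    [AddCommGroup U] [Module ℂ U]
    (b : Module.Basis B ℂ U) (w : U →ₗ[ℂ] U) (ξ : Equiv.Perm B) (le : B → B → Prop)
    (hlin : ∀ x y, le x y → ¬ le y x → x < y)
    (h : ActsByLOT b w ξ le) :
    ∃ Q R : Matrix B B ℂ,
      LinearMap.toMatrix b b w = Q * R ∧
      Q.transpose * Q = 1 ∧ Q * Q.transpose = 1 ∧
      (∃ ε : B → ℂ, (∀ x, ε x = 1 ∨ ε x = -1) ∧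
        ∀ i j, Q i j = if i = ξ j then ε j else 0) ∧
      (∀ i j : B, j < i → R i j = 0) ∧
      (∀ i : B, R i i = 1) ∧
      (∀ i j : B, ∃ m : ℤ, R i j = (m : ℂ)) := by
  obtain ⟨ε, hε, -, hw⟩ := h
  choose a ha using hw
  obtain ⟨s, rfl⟩ : ∃ s : B → ℤ, ε = fun x => (s x : ℂ) :=
    ⟨fun x => if ε x = 1 then 1 else -1, funext fun x => by rcases hε x with h | h <;> simp [h]⟩
  have hss : ∀ x, (s x : ℂ) * s x = 1 := fun x => by rcases hε x with h | h <;> simp [h]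
  set Q := signedPermMatrix ξ fun x => (s x : ℂ)
  have hQ : Qᵀ * Q = 1 := signedPermMatrix_transpose_mul_self ξ hss
  have hR : ∀ i j, (Qᵀ * LinearMap.toMatrix b b w) i j =
      s i * ((if i = j then (s j : ℂ) else 0) + if le i j ∧ ¬ le j i then (a j i : ℂ) else 0) := by
    intro i j
    rw [signedPermMatrix_transpose_mul_apply, LinearMap.toMatrix_apply_perm_of_eq_smul_add_sum
      b w ξ (fun x => (s x : ℂ)) (fun x y => if le y x ∧ ¬ le x y then (a x y : ℂ) else 0)
      fun x => by simp only [ha, ite_zero_smul]]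
  refine ⟨Q, Qᵀ * LinearMap.toMatrix b b w, ?_, hQ, mul_eq_one_comm.mp hQ,
    ⟨_, hε, fun _ _ => rfl⟩, fun i j hji => ?_, fun i => ?_, fun i j => ?_⟩
  · rw [← Matrix.mul_assoc, mul_eq_one_comm.mp hQ, Matrix.one_mul]
  · have hij : ¬ (le i j ∧ ¬ le j i) := fun h => (hlin i j h.1 h.2).not_gt hji
    simp [hR, hji.ne', hij]
  · simp [hR, hss]
  · exact ⟨s i * ((if i = j then s j else 0) + if le i j ∧ ¬ le j i then a j i else 0),
      by rw [hR]; push_cast; rfl⟩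

/-- If `w` acts on `(U, B, ≤)` by `ξ` up to lower-order terms and `⪯` (the given linear
order on `B`) linearises the preorder `≤`, then the matrix of `w` in the ordered basis
`(B, ⪯)` has a QR decomposition whose orthogonal factor is a generalised permutation
matrix for `ξ` with nonzero entries `±1`, and whose triangular factor is an
upper-triangular integer matrix with diagonal entries `1`. -/
theorem lot_QR {B U : Type*} [Fintype B] [DecidableEq B] [LinearOrder B]
    [AddCommGroup U] [Module ℂ U]
    (b : Module.Basis B ℂ U) (w : U →ₗ[ℂ] U) (ξ : Equiv.Perm B) (le : B → B → Prop)
    (hrefl : ∀ x, le x x) (htrans : ∀ x y z, le x y → le y z → le x z)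
    (hlin : ∀ x y, le x y → ¬ le y x → x < y)
    (h : ActsByLOT b w ξ le) :
    ∃ Q R : Matrix B B ℂ,
      LinearMap.toMatrix b b w = Q * R ∧
      Q.transpose * Q = 1 ∧ Q * Q.transpose = 1 ∧
      (∃ ε : B → ℂ, (∀ x, ε x = 1 ∨ ε x = -1) ∧
        ∀ i j, Q i j = if i = ξ j then ε j else 0) ∧
      (∀ i j : B, j < i → R i j = 0) ∧
      (∀ i : B, R i i = 1) ∧
      (∀ i j : B, ∃ m : ℤ, R i j = (m : ℂ)) :=
  lot_QR_general b w ξ le hlin h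
end
end

section
/- Let A be an n×n integer matrix representing an operator w on a based vector space (U, B) with respect to some fixed ordering of B. Then w acts on (U, B) by some bijection up to lower-order terms (for some preorder on B) if and only if there exist permutation matrices P₁, P₂ such that P₁ A P₂ is upper-triangular with integer entries and all diagonal entries equal to ±1. -/
/-!
Writing the coordinates of `w (b x)` in the basis, `w` acts by `ξ` up to lower-order terms iff
`A (ξ x) x = ±1`, constant on equivalence classes, and `A (ξ y) x = 0` unless `y = x` or `y` lies
strictly below `x`. Listing the columns along a linear extension `τ` of the preorder and the rows
along `ξ ∘ τ` makes `A` upper triangular with diagonal `±1`. Conversely, given such a form, the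
column order pulled back by `τ` is a (total) preorder and `ξ` matches columns to rows.
-/

open scoped Classical

noncomputable section

/-- The permutation matrix of `σ` (over `ℤ`). -/
def permMat (n : ℕ) (σ : Equiv.Perm (Fin n)) : Matrix (Fin n) (Fin n) ℤ :=
  fun i j => if σ j = i then 1 else 0

theorem permMat_mul_mul_permMat_apply {n : ℕ} (A : Matrix (Fin n) (Fin n) ℤ)
    (σ τ : Equiv.Perm (Fin n)) (i j : Fin n) :
    (permMat n σ * A * permMat n τ) i j = A (σ⁻¹ i) (τ j) := by
  simp only [permMat, Matrix.mul_apply, mul_ite, ite_mul, mul_one, one_mul, mul_zero, zero_mul]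
  rw [Finset.sum_ite_eq, if_pos (Finset.mem_univ _)]
  simp only [← Equiv.Perm.eq_inv_iff_eq, Finset.sum_ite_eq', Finset.mem_univ, if_true]

theorem exists_perm_lt_of_lt {α : Type*} [LinearOrder α] {n : ℕ} (f : Fin n → α) :
    ∃ τ : Equiv.Perm (Fin n), ∀ x y, f x < f y → τ.symm x < τ.symm y := by
  refine ⟨Tuple.sort f, fun x y hxy => lt_of_not_ge fun hyx => ?_⟩
  have := Tuple.monotone_sort f hyx
  simp only [Function.comp_apply, Equiv.apply_symm_apply] at this
  exact this.not_gt hxy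

-- Sort by the number of strict predecessors.
theorem exists_perm_lt_of_trans {n : ℕ} (le : Fin n → Fin n → Prop)
    (htrans : ∀ x y z, le x y → le y z → le x z) :
    ∃ τ : Equiv.Perm (Fin n), ∀ x y, le x y → ¬ le y x → τ.symm x < τ.symm y := by
  let below (x : Fin n) : Finset (Fin n) := {z | le z x ∧ ¬ le x z}
  suffices ∀ x y, le x y → ¬ le y x → (below x).card < (below y).card from
    (exists_perm_lt_of_lt fun x => (below x).card).imp fun τ hτ x y hxy hyx =>
      hτ x y (this x y hxy hyx)
  intro x y hxy hyx
  refine Finset.card_lt_card ⟨fun z hz => ?_, fun h => ?_⟩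
  · simp only [below, Finset.mem_filter, Finset.mem_univ, true_and] at hz ⊢
    exact ⟨htrans _ _ _ hz.1 hxy, fun hyz => hz.2 (htrans _ _ _ hxy hyz)⟩
  · simpa [below] using h (by simpa [below] using ⟨hxy, hyx⟩ : x ∈ below y)

theorem Module.Basis.repr_smul_add_sum_ite_apply {R B U : Type*} [Fintype B] [Semiring R]
    [AddCommMonoid U] [Module R U] (b : Module.Basis B R U) {ξ : B → B}
    (hξ : Function.Injective ξ) (c : R) (x : B) (p : B → Prop) [DecidablePred p] (a : B → R)
    (y : B) :
    b.repr (c • b (ξ x) + ∑ z, if p z then a z • b (ξ z) else 0) (ξ y) =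
      (if y = x then c else 0) + if p y then a y else 0 := by
  simp_rw [← ite_zero_smul]
  simp only [map_add, map_sum, map_smul, Finsupp.add_apply, Finsupp.coe_finsetSum,
    Finset.sum_apply, Finsupp.smul_apply, b.repr_self_apply, hξ.eq_iff, smul_eq_mul, mul_ite,
    mul_one, mul_zero, Finset.sum_ite_eq', Finset.mem_univ, if_true, eq_comm (a := x)]

section Coordinates

variable {B U : Type*} [Fintype B] [AddCommGroup U] [Module ℂ U] (b : Module.Basis B ℂ U)
  (w : U →ₗ[ℂ] U) (ξ : Equiv.Perm B) (le : B → B → Prop)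

-- The signs `ε` in `ActsByLOT` are forced to be the diagonal coordinates.
theorem actsByLOT_iff (hint : ∀ x y, ∃ m : ℤ, b.repr (w (b x)) y = m) :
    ActsByLOT b w ξ le ↔
      (∀ x, b.repr (w (b x)) (ξ x) = 1 ∨ b.repr (w (b x)) (ξ x) = -1) ∧
      (∀ x y, le x y → le y x → b.repr (w (b x)) (ξ x) = b.repr (w (b y)) (ξ y)) ∧
      ∀ x y, y ≠ x → ¬ (le y x ∧ ¬ le x y) → b.repr (w (b x)) (ξ y) = 0 := by
  constructor
  · rintro ⟨ε, hε, hconst, hw⟩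
    have hcoord : ∀ x, ∃ a : B → ℤ, ∀ y, b.repr (w (b x)) (ξ y) =
        (if y = x then ε x else 0) + if le y x ∧ ¬ le x y then (a y : ℂ) else 0 := fun x =>
      (hw x).imp fun a ha y => by
        rw [ha, b.repr_smul_add_sum_ite_apply ξ.injective]
    have hdiag : ∀ x, b.repr (w (b x)) (ξ x) = ε x := fun x => by
      obtain ⟨a, ha⟩ := hcoord x
      simp [ha]
    refine ⟨fun x => hdiag x ▸ hε x, fun x y hxy hyx => by rw [hdiag, hdiag, hconst x y hxy hyx],
      fun x y hne hlt => ?_⟩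
    obtain ⟨a, ha⟩ := hcoord x
    simp [ha, hne, hlt]
  · rintro ⟨hdiag, hconst, hoff⟩
    choose m hm using hint
    refine ⟨fun x => b.repr (w (b x)) (ξ x), hdiag, hconst, fun x => ⟨fun y => m x (ξ y), ?_⟩⟩
    have hterm : ∀ y, b.repr (w (b x)) (ξ y) • b (ξ y) =
        (if y = x then b.repr (w (b x)) (ξ x) • b (ξ x) else 0) +
          if le y x ∧ ¬ le x y then (m x (ξ y) : ℂ) • b (ξ y) else 0 := by
      intro y
      by_cases hyx : y = x
      · subst hyx
        simp
      by_cases hlt : le y x ∧ ¬ le x y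
      · simp [hyx, hlt, hm]
      · simp [hyx, hlt, hoff x y hyx hlt]
    calc w (b x) = ∑ y, b.repr (w (b x)) (ξ y) • b (ξ y) :=
          (b.sum_repr _).symm.trans (Equiv.sum_comp ξ _).symm
      _ = _ := by
        rw [Finset.sum_congr rfl fun y _ => hterm y, Finset.sum_add_distrib, Finset.sum_ite_eq',
          if_pos (Finset.mem_univ _)]

end Coordinates

section Triangular

variable {n : ℕ} {A : Matrix (Fin n) (Fin n) ℤ} {U : Type*} [AddCommGroup U] [Module ℂ U]
  {b : Module.Basis (Fin n) ℂ U} {w : U →ₗ[ℂ] U}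

theorem exists_triangular_of_actsByLOT (hA : ∀ i x, b.repr (w (b x)) i = A i x)
    {ξ : Equiv.Perm (Fin n)} {le : Fin n → Fin n → Prop}
    (htrans : ∀ x y z, le x y → le y z → le x z) (h : ActsByLOT b w ξ le) :
    ∃ σ τ : Equiv.Perm (Fin n),
      (∀ i j : Fin n, j < i → (permMat n σ * A * permMat n τ) i j = 0) ∧
      (∀ i : Fin n, (permMat n σ * A * permMat n τ) i i = 1 ∨
        (permMat n σ * A * permMat n τ) i i = -1) := by
  obtain ⟨hdiag, -, hoff⟩ := (actsByLOT_iff b w ξ le fun x i => ⟨A i x, hA i x⟩).1 h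
  obtain ⟨τ, hτ⟩ := exists_perm_lt_of_trans le htrans
  have hσ : ∀ i, ((τ.trans ξ).symm)⁻¹ i = ξ (τ i) := fun i => rfl
  refine ⟨(τ.trans ξ).symm, τ, fun i j hji => ?_, fun i => ?_⟩
  · rw [permMat_mul_mul_permMat_apply, hσ]
    have hne : τ i ≠ τ j := τ.injective.ne hji.ne'
    have hnlt : ¬ (le (τ i) (τ j) ∧ ¬ le (τ j) (τ i)) := fun hlt =>
      (by simpa using hτ _ _ hlt.1 hlt.2 : i < j).asymm hji
    exact_mod_cast (hA _ _).symm.trans (hoff _ _ hne hnlt)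
  · rw [permMat_mul_mul_permMat_apply, hσ]
    have hii := hdiag (τ i)
    rw [hA] at hii
    exact_mod_cast hii

theorem actsByLOT_of_triangular (hA : ∀ i x, b.repr (w (b x)) i = A i x)
    {σ τ : Equiv.Perm (Fin n)}
    (htri : ∀ i j : Fin n, j < i → (permMat n σ * A * permMat n τ) i j = 0)
    (hdiag : ∀ i : Fin n, (permMat n σ * A * permMat n τ) i i = 1 ∨
      (permMat n σ * A * permMat n τ) i i = -1) :
    ActsByLOT b w (τ.symm.trans σ.symm) fun x y => τ.symm x ≤ τ.symm y := by
  have hM : ∀ x y, b.repr (w (b x)) ((τ.symm.trans σ.symm) y) =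
      (permMat n σ * A * permMat n τ) (τ.symm y) (τ.symm x) :=
    fun x y => by
      rw [hA, permMat_mul_mul_permMat_apply, Equiv.Perm.inv_def, Equiv.apply_symm_apply]
      rfl
  refine (actsByLOT_iff b w _ _ fun x i => ⟨A i x, hA i x⟩).2
    ⟨fun x => ?_, fun x y hxy hyx => ?_, fun x y hne hnlt => ?_⟩
  · rw [hM]
    exact_mod_cast hdiag _
  · rw [τ.symm.injective (le_antisymm hxy hyx)]
  · rw [hM]
    have hxy : τ.symm x < τ.symm y :=
      (not_lt.1 (mt lt_iff_le_not_ge.1 hnlt)).lt_of_ne (τ.symm.injective.ne hne.symm)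
    exact_mod_cast htri _ _ hxy

end Triangular

/-- An operator `w` whose matrix with respect to a fixed ordered basis is the integer
matrix `A` acts by some bijection up to lower-order terms (for some preorder) iff there
are permutation matrices `P₁, P₂` for which `P₁ * A * P₂` is upper-triangular with all
diagonal entries `±1`. -/
theorem lot_iff_triangularizable (n : ℕ) (A : Matrix (Fin n) (Fin n) ℤ)
    {U : Type*} [AddCommGroup U] [Module ℂ U] (b : Module.Basis (Fin n) ℂ U)
    (w : U →ₗ[ℂ] U)
    (hw : LinearMap.toMatrix b b w = A.map (Int.cast : ℤ → ℂ)) :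
    (∃ (ξ : Equiv.Perm (Fin n)) (le : Fin n → Fin n → Prop),
        (∀ x, le x x) ∧ (∀ x y z, le x y → le y z → le x z) ∧
        ActsByLOT b w ξ le) ↔
    (∃ σ τ : Equiv.Perm (Fin n),
        (∀ i j : Fin n, j < i → (permMat n σ * A * permMat n τ) i j = 0) ∧
        (∀ i : Fin n, (permMat n σ * A * permMat n τ) i i = 1 ∨
          (permMat n σ * A * permMat n τ) i i = -1)) := by
  have hA : ∀ i x, b.repr (w (b x)) i = A i x := fun i x => by
    rw [← LinearMap.toMatrix_apply, hw, Matrix.map_apply]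
  constructor
  · rintro ⟨ξ, le, -, htrans, h⟩
    exact exists_triangular_of_actsByLOT hA htrans h
  · rintro ⟨σ, τ, htri, hdiag⟩
    exact ⟨_, fun x y => τ.symm x ≤ τ.symm y, fun x => le_rfl, fun x y z => le_trans,
      actsByLOT_of_triangular hA htri hdiag⟩
end
end
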